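/- arXiv:1902.08247 — 2 statements merged into one kernel-verified Lean document; each statement's English description precedes it below -/
import Mathlib

section
/- Let Δ be the operator Δf = -f_tt + (sin t / cos t) f_t - (1/cos² t) f_φφ. For every positive integer m there exist real constants d₀, d₁, …, d_{m-1} with d₀ = 2^{m-1} and d_{m-1} = (-1)^{m-1}(2m-1)∏_{j=1}^{m}(2j-3)² ≠ 0, such that for x₁(t,φ) = (a + r cos t) cos φ one has Δ^m x₁ = (∑_{j=0}^{m-1} d_j / cos^{2(j+1)} t) · a cos φ + 2^m r cos t cos φ on the domain where cos t ≠ 0. -/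
/-!
On functions `g t * cos φ` the operator `Δ` acts only on `g`, through
`radialDelta g = -g'' + tan t * g' + g / cos² t`, and `radialDelta cos = 2 cos`. With
`w = 1 / cos² t`, `radialDelta` sends `q(w)` to `(D q)(w)` for a polynomial `q`, where
`D = radialDeltaPoly` is `D q = w q - (4w² - 2w) q' - 4(w³ - w²) q''`; with the Euler operator
`θ = w d/dw` this is `D = 2θ(2θ - 1) - w(4θ² - 1)`, so `D wᵏ = 2k(2k - 1) wᵏ - (4k² - 1) wᵏ⁺¹`.
Hence `Δᵐ x₁ = (a (Dᵐ 1)(w) + 2ᵐ r cos t) cos φ`, and the `d_j` are the coefficients of `Dᵐ 1`: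
the coefficient of `w` doubles at each step and the top one gets multiplied by `1 - 4k²`.
-/

open Real

/-- partial derivative in the first variable `t` -/
noncomputable def pderivT (f : ℝ → ℝ → ℝ) : ℝ → ℝ → ℝ := fun t φ => deriv (fun s => f s φ) t

/-- partial derivative in the second variable `φ` -/
noncomputable def pderivP (f : ℝ → ℝ → ℝ) : ℝ → ℝ → ℝ := fun t φ => deriv (fun ψ => f t ψ) φ

/-- The Beltrami operator of the third fundamental form of an anchor ring:
`Δf = -f_tt + (sin t / cos t) f_t - (1/cos² t) f_φφ`. -/
noncomputable def DeltaIII (f : ℝ → ℝ → ℝ) : ℝ → ℝ → ℝ := fun t φ =>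
  - pderivT (pderivT f) t φ + (Real.sin t / Real.cos t) * pderivT f t φ
    - (1 / (Real.cos t) ^ 2) * pderivP (pderivP f) t φ

open Polynomial Filter Topology

noncomputable def radialDelta (g : ℝ → ℝ) : ℝ → ℝ := fun t =>
  -deriv (deriv g) t + (sin t / cos t) * deriv g t + (1 / cos t ^ 2) * g t

theorem DeltaIII_mul_cos (g : ℝ → ℝ) :
    DeltaIII (fun t φ => g t * cos φ) = fun t φ => radialDelta g t * cos φ := by
  ext t φ
  simp only [DeltaIII, pderivT, pderivP, radialDelta, deriv_mul_const_field,
    deriv_const_mul_field, Real.deriv_cos', deriv.fun_neg, Real.deriv_sin]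
  ring

theorem DeltaIII_iterate_mul_cos (g : ℝ → ℝ) (m : ℕ) :
    DeltaIII^[m] (fun t φ => g t * cos φ) = fun t φ => radialDelta^[m] g t * cos φ :=
  ((Function.Semiconj.iterate_right (f := fun g t φ => g t * cos φ)
    (fun g => (DeltaIII_mul_cos g).symm) m) g).symm

theorem radialDelta_congr {g h : ℝ → ℝ} {t : ℝ} (hgh : g =ᶠ[𝓝 t] h) :
    radialDelta g t = radialDelta h t := by
  simp only [radialDelta, hgh.deriv.deriv_eq, hgh.deriv_eq, hgh.self_of_nhds]

theorem radialDelta_eq_of_hasDerivAt {g g' : ℝ → ℝ} {g'' t : ℝ}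
    (hg : ∀ᶠ s in 𝓝 t, HasDerivAt g (g' s) s) (hg' : HasDerivAt g' g'' t) :
    radialDelta g t = -g'' + (sin t / cos t) * g' t + (1 / cos t ^ 2) * g t := by
  have hderiv : deriv g =ᶠ[𝓝 t] g' := hg.mono fun s hs => hs.deriv
  rw [radialDelta, hderiv.deriv_eq, hderiv.self_of_nhds, hg'.deriv]

theorem hasDerivAt_inv_cos_sq {t : ℝ} (ht : cos t ≠ 0) :
    HasDerivAt (fun s => (cos s ^ 2)⁻¹) (2 * sin t / cos t ^ 3) t := by
  refine (((hasDerivAt_cos t).fun_pow 2).fun_inv (pow_ne_zero 2 ht)).congr_deriv ?_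
  field_simp
  ring

theorem hasDerivAt_two_mul_sin_div_cos_pow_three {t : ℝ} (ht : cos t ≠ 0) :
    HasDerivAt (fun s => 2 * sin s / cos s ^ 3) (2 / cos t ^ 2 + 6 * sin t ^ 2 / cos t ^ 4) t := by
  refine (((hasDerivAt_sin t).const_mul 2).fun_div ((hasDerivAt_cos t).fun_pow 3)
    (pow_ne_zero 3 ht)).congr_deriv ?_
  field_simp
  ring

section PolynomialOperator

variable {R : Type*}

noncomputable def eulerOp [Semiring R] (q : R[X]) : R[X] := X * derivative q

theorem coeff_eulerOp [Semiring R] (q : R[X]) (n : ℕ) : (eulerOp q).coeff n = n * q.coeff n := by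
  cases n with
  | zero => simp [eulerOp]
  | succ k => rw [eulerOp, coeff_X_mul, coeff_derivative, ← Nat.cast_succ, Nat.cast_comm]

variable [CommRing R]

noncomputable def radialDeltaPoly (q : R[X]) : R[X] :=
  2 * eulerOp (2 * eulerOp q - q) - X * (4 * eulerOp (eulerOp q) - q)

theorem coeff_radialDeltaPoly_zero (q : R[X]) : (radialDeltaPoly q).coeff 0 = 0 := by
  simp [radialDeltaPoly, coeff_eulerOp]

theorem coeff_radialDeltaPoly_succ (q : R[X]) (k : ℕ) :
    (radialDeltaPoly q).coeff (k + 1) =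
      (2 * k + 1) * (2 * k + 2) * q.coeff (k + 1) - (4 * k ^ 2 - 1) * q.coeff k := by
  simp only [radialDeltaPoly, coeff_sub, coeff_X_mul, coeff_eulerOp, coeff_ofNat_mul]
  push_cast
  ring

theorem eval_radialDeltaPoly (q : R[X]) (x : R) :
    (radialDeltaPoly q).eval x = x * q.eval x + (2 * x - 4 * x ^ 2) * (derivative q).eval x
      + (4 * x ^ 2 - 4 * x ^ 3) * (derivative (derivative q)).eval x := by
  simp only [radialDeltaPoly, eulerOp, eval_sub, eval_mul, eval_X, eval_ofNat, derivative_mul,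
    derivative_X, derivative_sub, derivative_ofNat, eval_add, eval_one, eval_zero]
  ring

theorem coeff_radialDeltaPoly_iterate_eq_zero_of_lt {m n : ℕ} (h : m < n) :
    (radialDeltaPoly^[m] (1 : R[X])).coeff n = 0 := by
  induction m generalizing n with
  | zero => simp [coeff_one, h.ne']
  | succ m ih =>
    obtain ⟨k, rfl⟩ : ∃ k, n = k + 1 := ⟨n - 1, by omega⟩
    rw [Function.iterate_succ_apply', coeff_radialDeltaPoly_succ, ih (by omega), ih (by omega)]
    ring

theorem natDegree_radialDeltaPoly_iterate_le (m : ℕ) :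
    (radialDeltaPoly^[m] (1 : R[X])).natDegree ≤ m :=
  natDegree_le_iff_coeff_eq_zero.mpr fun _ => coeff_radialDeltaPoly_iterate_eq_zero_of_lt

theorem coeff_zero_radialDeltaPoly_iterate {m : ℕ} (hm : 1 ≤ m) :
    (radialDeltaPoly^[m] (1 : R[X])).coeff 0 = 0 := by
  obtain ⟨k, rfl⟩ := Nat.exists_eq_add_of_le' hm
  rw [Function.iterate_succ_apply', coeff_radialDeltaPoly_zero]

theorem coeff_one_radialDeltaPoly_iterate {m : ℕ} (hm : 1 ≤ m) :
    (radialDeltaPoly^[m] (1 : R[X])).coeff 1 = 2 ^ (m - 1) := by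
  induction m, hm using Nat.le_induction with
  | base => simp [coeff_radialDeltaPoly_succ 1 0, coeff_one]
  | succ m hm ih =>
    rw [Function.iterate_succ_apply', coeff_radialDeltaPoly_succ _ 0, ih,
      coeff_zero_radialDeltaPoly_iterate hm, Nat.add_sub_cancel]
    conv_rhs => rw [← Nat.sub_add_cancel hm, pow_succ]
    push_cast
    ring

theorem coeff_radialDeltaPoly_iterate_self (m : ℕ) :
    (radialDeltaPoly^[m] (1 : R[X])).coeff m = ∏ j ∈ Finset.range m, (1 - 4 * (j : R) ^ 2) := by
  induction m with
  | zero => simp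
  | succ m ih =>
    rw [Function.iterate_succ_apply', coeff_radialDeltaPoly_succ,
      coeff_radialDeltaPoly_iterate_eq_zero_of_lt m.lt_succ_self, ih, Finset.prod_range_succ]
    ring

theorem eval_radialDeltaPoly_iterate {m : ℕ} (hm : 1 ≤ m) (x : R) :
    (radialDeltaPoly^[m] (1 : R[X])).eval x =
      ∑ j ∈ Finset.range m, (radialDeltaPoly^[m] (1 : R[X])).coeff (j + 1) * x ^ (j + 1) := by
  rw [eval_eq_sum_range' (Nat.lt_succ_of_le (natDegree_radialDeltaPoly_iterate_le m)),
    Finset.sum_range_succ', coeff_zero_radialDeltaPoly_iterate hm]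
  simp

end PolynomialOperator

theorem radialDelta_eval_inv_cos_sq_add_cos (q : ℝ[X]) (a c : ℝ) {t : ℝ} (ht : cos t ≠ 0) :
    radialDelta (fun s => a * q.eval (cos s ^ 2)⁻¹ + c * cos s) t =
      a * (radialDeltaPoly q).eval (cos t ^ 2)⁻¹ + 2 * c * cos t := by
  have hq (p : ℝ[X]) {s : ℝ} (hs : cos s ≠ 0) :
      HasDerivAt (fun s => p.eval (cos s ^ 2)⁻¹)
        ((derivative p).eval (cos s ^ 2)⁻¹ * (2 * sin s / cos s ^ 3)) s :=
    (p.hasDerivAt _).comp s (hasDerivAt_inv_cos_sq hs)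
  have hg : ∀ᶠ s in 𝓝 t, HasDerivAt (fun s => a * q.eval (cos s ^ 2)⁻¹ + c * cos s)
      (a * ((derivative q).eval (cos s ^ 2)⁻¹ * (2 * sin s / cos s ^ 3)) - c * sin s) s := by
    filter_upwards [continuous_cos.continuousAt.eventually_ne ht] with s hs
    refine (((hq q hs).const_mul a).fun_add ((hasDerivAt_cos s).const_mul c)).congr_deriv ?_
    ring
  have hg' := (((hq (derivative q) ht).fun_mul
    (hasDerivAt_two_mul_sin_div_cos_pow_three ht)).const_mul a).fun_sub
      ((hasDerivAt_sin t).const_mul c)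
  rw [radialDelta_eq_of_hasDerivAt hg hg', eval_radialDeltaPoly]
  field_simp
  rw [sin_sq]
  ring

theorem radialDelta_iterate_const_add_cos (a r : ℝ) (m : ℕ) {t : ℝ} (ht : cos t ≠ 0) :
    radialDelta^[m] (fun s => a + r * cos s) t =
      a * (radialDeltaPoly^[m] 1).eval (cos t ^ 2)⁻¹ + 2 ^ m * r * cos t := by
  induction m generalizing t with
  | zero => simp
  | succ m ih =>
    have hnear : radialDelta^[m] (fun s => a + r * cos s) =ᶠ[𝓝 t]
        fun s => a * (radialDeltaPoly^[m] 1).eval (cos s ^ 2)⁻¹ + 2 ^ m * r * cos s := by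
      filter_upwards [continuous_cos.continuousAt.eventually_ne ht] with s hs using ih hs
    rw [Function.iterate_succ_apply', Function.iterate_succ_apply', radialDelta_congr hnear,
      radialDelta_eval_inv_cos_sq_add_cos _ _ _ ht]
    ring

theorem prod_range_one_sub_four_mul_sq {m : ℕ} (hm : 1 ≤ m) :
    ∏ j ∈ Finset.range m, (1 - 4 * (j : ℝ) ^ 2) =
      (-1) ^ (m - 1) * (2 * (m : ℝ) - 1) * ∏ j ∈ Finset.Icc 1 m, (2 * (j : ℝ) - 3) ^ 2 := by
  induction m, hm using Nat.le_induction with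
  | base => norm_num
  | succ m hm ih =>
    rw [Finset.prod_range_succ, ih, Finset.prod_Icc_succ_top (by omega), Nat.add_sub_cancel,
      ← Nat.sub_add_cancel hm, pow_succ]
    push_cast
    ring

theorem prod_range_one_sub_four_mul_sq_ne_zero (m : ℕ) :
    ∏ j ∈ Finset.range m, (1 - 4 * (j : ℝ) ^ 2) ≠ 0 := by
  refine Finset.prod_ne_zero_iff.mpr fun j _ => ?_
  rcases j with _ | k
  · norm_num
  · push_cast
    nlinarith [k.cast_nonneg (α := ℝ)]

theorem stmt_9 (m : ℕ) (hm : 1 ≤ m) :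
    ∃ d : ℕ → ℝ, d 0 = 2 ^ (m - 1) ∧
      d (m - 1) = (-1 : ℝ) ^ (m - 1) * (2 * (m : ℝ) - 1) *
        ∏ j ∈ Finset.Icc 1 m, (2 * (j : ℝ) - 3) ^ 2 ∧
      d (m - 1) ≠ 0 ∧
      ∀ (a r t φ : ℝ), Real.cos t ≠ 0 →
        (DeltaIII^[m] (fun t φ => (a + r * Real.cos t) * Real.cos φ)) t φ =
          (∑ j ∈ Finset.range m, d j / (Real.cos t) ^ (2 * (j + 1))) * (a * Real.cos φ)
            + 2 ^ m * r * Real.cos t * Real.cos φ := by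
  set P : ℝ[X] := radialDeltaPoly^[m] 1
  have hlead : P.coeff (m - 1 + 1) = ∏ j ∈ Finset.range m, (1 - 4 * (j : ℝ) ^ 2) := by
    rw [Nat.sub_add_cancel hm, coeff_radialDeltaPoly_iterate_self]
  refine ⟨fun j => P.coeff (j + 1), coeff_one_radialDeltaPoly_iterate hm, ?_, ?_, ?_⟩
  · dsimp only
    rw [hlead, prod_range_one_sub_four_mul_sq hm]
  · dsimp only
    rw [hlead]
    exact prod_range_one_sub_four_mul_sq_ne_zero m
  · intro a r t φ ht
    rw [DeltaIII_iterate_mul_cos (fun t => a + r * cos t)]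
    dsimp only
    rw [radialDelta_iterate_const_add_cos a r m ht, eval_radialDeltaPoly_iterate hm]
    simp only [div_eq_mul_inv, pow_mul, inv_pow]
    ring
end

section
/- The anchor ring x(t,φ) = ((a + r cos t) cos φ, (a + r cos t) sin φ, r sin t), with 0 < r < a, is of infinite type with respect to the third fundamental form: there is no positive integer m and real constants c₁, …, c_m such that Δ^m x₁ + c₁ Δ^{m-1} x₁ + … + c_{m-1} Δ x₁ + c_m x₁ = 0 holds identically (on an open set where cos t ≠ 0), where x₁(t,φ) = (a + r cos t) cos φ and Δf = -f_tt + (sin t/cos t) f_t - (1/cos² t) f_φφ. -/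
open Real

/-!
The Beltrami operator preserves the `cos φ`-mode: `Δ(g(t) cos φ) = (L g)(t) cos φ` with
`L g = -g'' + tan t · g' + g / cos² t`, and `L (cos^j) = j(j+1) cos^j + (1 - j²) cos^(j-2)`.
Starting from `x₁ = (a + r cos t) cos φ`, the iterate `Δⁿx₁` is therefore `cos φ` times a Laurent
polynomial in `cos t` supported in degrees `[-2n, 1]`, whose lowest coefficient
`a · ∏_{k<n} (1 - 4k²)` is nonzero. In a relation `Δ^m x₁ + ∑ cᵢ Δ^(m-i) x₁ = 0` the coefficient of
`cos^(-2m) t` comes from `Δ^m x₁` alone, so a nonzero Laurent polynomial would vanish at the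
infinitely many values of `cos` on an interval.
-/

open Topology Finset

noncomputable def deltaIIIProfile (g : ℝ → ℝ) (t : ℝ) : ℝ :=
  -deriv (deriv g) t + sin t / cos t * deriv g t + 1 / cos t ^ 2 * g t

theorem DeltaIII_eq_deltaIIIProfile_mul_cos {U : Set ℝ} (hU : IsOpen U) {f : ℝ → ℝ → ℝ}
    {g : ℝ → ℝ} (hfg : ∀ t ∈ U, ∀ φ, f t φ = g t * cos φ) :
    ∀ t ∈ U, ∀ φ, DeltaIII f t φ = deltaIIIProfile g t * cos φ := by
  have hT : ∀ t ∈ U, ∀ φ, pderivT f t φ = deriv g t * cos φ := fun t ht φ => by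
    have hev : (fun s => f s φ) =ᶠ[𝓝 t] fun s => g s * cos φ := by
      filter_upwards [hU.mem_nhds ht] with s hs using hfg s hs φ
    rw [pderivT, hev.deriv_eq, deriv_mul_const_field]
  intro t ht φ
  have hTT : pderivT (pderivT f) t φ = deriv (deriv g) t * cos φ := by
    have hev : (fun s => pderivT f s φ) =ᶠ[𝓝 t] fun s => deriv g s * cos φ := by
      filter_upwards [hU.mem_nhds ht] with s hs using hT s hs φ
    rw [pderivT, hev.deriv_eq, deriv_mul_const_field]
  have hP : pderivP f t = fun ψ => -(g t * sin ψ) := by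
    ext ψ
    rw [pderivP, funext (hfg t ht), deriv_const_mul_field, Real.deriv_cos, mul_neg]
  have hPP : pderivP (pderivP f) t φ = -(g t * cos φ) := by
    rw [pderivP, hP, deriv.fun_neg, deriv_const_mul_field, Real.deriv_sin]
  rw [DeltaIII, hTT, hT t ht, hPP, deltaIIIProfile]
  ring

noncomputable def cosLaurent (s : Finset ℤ) (q : ℤ → ℝ) (t : ℝ) : ℝ :=
  ∑ j ∈ s, q j * cos t ^ j

theorem hasDerivAt_cos_zpow (j : ℤ) {t : ℝ} (ht : cos t ≠ 0) :
    HasDerivAt (fun s => cos s ^ j) (-(j * cos t ^ (j - 1) * sin t)) t := by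
  simpa [Function.comp_def, mul_assoc] using
    (hasDerivAt_zpow j (cos t) (Or.inl ht)).comp t (Real.hasDerivAt_cos t)

theorem deltaIIIProfile_cosLaurent (s : Finset ℤ) (q : ℤ → ℝ) {t : ℝ} (ht : cos t ≠ 0) :
    deltaIIIProfile (cosLaurent s q) t
      = ∑ j ∈ s, q j * (j * (j + 1) * cos t ^ j + (1 - j ^ 2) * cos t ^ (j - 2)) := by
  have hD : ∀ t', cos t' ≠ 0 → HasDerivAt (cosLaurent s q)
      (∑ j ∈ s, q j * -(j * cos t' ^ (j - 1) * sin t')) t' := fun t' ht' =>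
    HasDerivAt.fun_sum fun j _ => (hasDerivAt_cos_zpow j ht').const_mul (q j)
  have hDD : HasDerivAt (fun t' => ∑ j ∈ s, q j * -(j * cos t' ^ (j - 1) * sin t'))
      (∑ j ∈ s, q j * -(j * (cos t ^ (j - 1) * cos t - (j - 1) * cos t ^ (j - 2) * sin t ^ 2)))
      t := by
    refine HasDerivAt.fun_sum fun j _ => ((HasDerivAt.neg ?_).const_mul (q j))
    refine (((hasDerivAt_cos_zpow (j - 1) ht).const_mul (j : ℝ)).mul
      (Real.hasDerivAt_sin t)).congr_deriv ?_
    rw [show j - 1 - 1 = j - 2 by ring]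
    push_cast
    ring
  have hderiv : deriv (cosLaurent s q) =ᶠ[𝓝 t]
      fun t' => ∑ j ∈ s, q j * -(j * cos t' ^ (j - 1) * sin t') := by
    filter_upwards [(isOpen_ne_fun continuous_cos continuous_const).mem_nhds ht]
      with t' ht' using (hD t' ht').deriv
  rw [deltaIIIProfile, hderiv.deriv_eq, hDD.deriv, (hD t ht).deriv, cosLaurent,
    mul_sum, mul_sum, ← sum_neg_distrib, ← sum_add_distrib,
    ← sum_add_distrib]
  refine sum_congr rfl fun j _ => ?_
  have h1 : cos t ^ (j - 1) = cos t ^ (j - 2) * cos t := by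
    rw [← zpow_add_one₀ ht]; ring_nf
  have h2 : cos t ^ j = cos t ^ (j - 2) * cos t ^ 2 := by
    rw [← zpow_natCast, ← zpow_add₀ ht]; ring_nf
  rw [h1, h2]
  field_simp
  linear_combination (-j ^ 2 * q j) * Real.sin_sq t

-- `cos^j` receives `j (j + 1) q j` from the `j`-th term of `deltaIIIProfile_cosLaurent` and
-- `(1 - (j + 2)²) q (j + 2)` from the `(j + 2)`-th.
def cosStep (q : ℤ → ℝ) (j : ℤ) : ℝ :=
  j * (j + 1) * q j + (1 - (j + 2) ^ 2) * q (j + 2)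

theorem sum_Icc_eq_sum_Icc_cosStep {lo hi : ℤ} {q : ℤ → ℝ} (hq : ∀ j ∉ Icc lo hi, q j = 0)
    (u : ℝ) :
    ∑ j ∈ Icc lo hi, q j * (j * (j + 1) * u ^ j + (1 - j ^ 2) * u ^ (j - 2))
      = ∑ j ∈ Icc (lo - 2) hi, cosStep q j * u ^ j := by
  have hsub : Icc lo hi ⊆ Icc (lo - 2) hi := Icc_subset_Icc (by omega) le_rfl
  have hshift : ∑ j ∈ Icc (lo - 2) hi, (1 - ((j : ℝ) + 2) ^ 2) * q (j + 2) * u ^ j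
      = ∑ j ∈ Icc lo hi, (1 - (j : ℝ) ^ 2) * q j * u ^ (j - 2) := by
    have hmap := map_add_right_Icc (lo - 2) hi 2
    rw [sub_add_cancel] at hmap
    rw [eq_comm, sum_subset (Icc_subset_Icc le_rfl (by omega : hi ≤ hi + 2)), ← hmap, sum_map]
    · simp [add_sub_cancel_right]
    · intro j _ hj
      simp [hq j hj]
  simp only [cosStep, add_mul, sum_add_distrib, hshift]
  rw [← sum_subset hsub]
  · simp only [mul_add, sum_add_distrib]
    congr 1 <;> refine sum_congr rfl fun j _ => ?_ <;> ring
  · intro j _ hj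
    simp [hq j hj]

theorem deltaIIIProfile_cosLaurent_Icc {lo hi : ℤ} {q : ℤ → ℝ} (hq : ∀ j ∉ Icc lo hi, q j = 0)
    {t : ℝ} (ht : cos t ≠ 0) :
    deltaIIIProfile (cosLaurent (Icc lo hi) q) t = cosLaurent (Icc (lo - 2) hi) (cosStep q) t := by
  rw [deltaIIIProfile_cosLaurent _ _ ht, sum_Icc_eq_sum_Icc_cosStep hq]
  rfl

theorem cosStep_eq_zero_of_notMem {lo hi : ℤ} {q : ℤ → ℝ} (hq : ∀ j ∉ Icc lo hi, q j = 0)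
    {j : ℤ} (hj : j ∉ Icc (lo - 2) hi) : cosStep q j = 0 := by
  simp only [mem_Icc, not_and_or, not_le] at hj
  rw [cosStep, hq j (by simp only [mem_Icc]; omega), hq (j + 2) (by simp only [mem_Icc]; omega)]
  ring

theorem cosStep_sub_two {lo : ℤ} {q : ℤ → ℝ} (hq : ∀ j < lo, q j = 0) :
    cosStep q (lo - 2) = (1 - (lo : ℝ) ^ 2) * q lo := by
  rw [cosStep, hq _ (by omega), sub_add_cancel]
  push_cast
  ring

noncomputable def anchorCoeff (a r : ℝ) (n : ℕ) : ℤ → ℝ :=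
  cosStep^[n] fun j => if j = 0 then a else if j = 1 then r else 0

theorem anchorCoeff_succ (a r : ℝ) (n : ℕ) :
    anchorCoeff a r (n + 1) = cosStep (anchorCoeff a r n) :=
  Function.iterate_succ_apply' _ _ _

theorem anchorCoeff_eq_zero_of_notMem (a r : ℝ) (n : ℕ) {j : ℤ} (hj : j ∉ Icc (-2 * n : ℤ) 1) :
    anchorCoeff a r n j = 0 := by
  induction n generalizing j with
  | zero =>
    simp only [mem_Icc, CharP.cast_eq_zero, mul_zero, not_and_or, not_le] at hj
    simp only [anchorCoeff, Function.iterate_zero, id_eq]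
    rw [if_neg (by omega), if_neg (by omega)]
  | succ n ih =>
    rw [anchorCoeff_succ]
    refine cosStep_eq_zero_of_notMem (fun j hj => ih hj) ?_
    rwa [show -2 * ((n + 1 : ℕ) : ℤ) = -2 * n - 2 by push_cast; ring] at hj

theorem cosLaurent_anchorCoeff_of_le (a r : ℝ) {n N : ℕ} (hnN : n ≤ N) :
    cosLaurent (Icc (-2 * n : ℤ) 1) (anchorCoeff a r n)
      = cosLaurent (Icc (-2 * N : ℤ) 1) (anchorCoeff a r n) := by
  ext t
  refine sum_subset (Icc_subset_Icc (by omega) le_rfl) fun j _ hj => ?_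
  rw [anchorCoeff_eq_zero_of_notMem a r n hj, zero_mul]

theorem anchorCoeff_neg_two_mul_ne_zero {a : ℝ} (ha : a ≠ 0) (r : ℝ) (n : ℕ) :
    anchorCoeff a r n (-2 * n) ≠ 0 := by
  induction n with
  | zero => simpa [anchorCoeff] using ha
  | succ n ih =>
    have hlow : ∀ j < -2 * (n : ℤ), anchorCoeff a r n j = 0 := fun j hj =>
      anchorCoeff_eq_zero_of_notMem a r n (by simp only [mem_Icc]; omega)
    rw [anchorCoeff_succ, show -2 * ((n + 1 : ℕ) : ℤ) = -2 * n - 2 by push_cast; ring,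
      cosStep_sub_two hlow]
    refine mul_ne_zero ?_ ih
    rcases n.eq_zero_or_pos with rfl | hn
    · norm_num
    · have : (1 : ℝ) ≤ n := by exact_mod_cast hn
      push_cast
      nlinarith

theorem iterate_DeltaIII_anchor (a r : ℝ) (n : ℕ) {t : ℝ} (ht : cos t ≠ 0) (φ : ℝ) :
    DeltaIII^[n] (fun t φ => (a + r * cos t) * cos φ) t φ
      = cosLaurent (Icc (-2 * n : ℤ) 1) (anchorCoeff a r n) t * cos φ := by
  induction n generalizing t φ with
  | zero =>
    simp [cosLaurent, anchorCoeff, show Icc (0 : ℤ) 1 = {0, 1} from rfl]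
  | succ n ih =>
    rw [Function.iterate_succ_apply',
      DeltaIII_eq_deltaIIIProfile_mul_cos (isOpen_ne_fun continuous_cos continuous_const)
        (fun t ht φ => ih ht φ) t ht φ,
      deltaIIIProfile_cosLaurent_Icc (fun j hj => anchorCoeff_eq_zero_of_notMem a r n hj) ht,
      anchorCoeff_succ]
    push_cast
    ring_nf

theorem eq_zero_of_sum_zpow_eq_zero {K : Type*} [Field K] {s : Finset ℤ} {q : ℤ → K} {S : Set K}
    (hS : S.Infinite) (h : ∀ u ∈ S, u ≠ 0 → ∑ j ∈ s, q j * u ^ j = 0) {j : ℤ} (hj : j ∈ s) :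
    q j = 0 := by
  obtain ⟨lo, hlo⟩ := s.bddBelow
  have hP : ∑ i ∈ s, Polynomial.C (q i) * Polynomial.X ^ (i - lo).toNat = 0 := by
    refine Polynomial.eq_zero_of_infinite_isRoot _ ((hS.sdiff (Set.finite_singleton 0)).mono ?_)
    rintro u ⟨huS, hu0 : u ≠ 0⟩
    have hpow : ∀ i ∈ s, u ^ (i - lo).toNat = u ^ i * u ^ (-lo) := fun i hi => by
      rw [← zpow_natCast, Int.toNat_of_nonneg (sub_nonneg.mpr (hlo hi)), ← zpow_add₀ hu0,
        sub_eq_add_neg]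
    change Polynomial.eval u _ = 0
    simp only [Polynomial.eval_finsetSum, Polynomial.eval_mul, Polynomial.eval_C,
      Polynomial.eval_pow, Polynomial.eval_X]
    rw [sum_congr rfl fun i hi => by rw [hpow i hi, ← mul_assoc], ← sum_mul, h u huS hu0,
      zero_mul]
  have hcoeff := congrArg (Polynomial.coeff · (j - lo).toNat) hP
  simp only [Polynomial.finsetSum_coeff, Polynomial.coeff_C_mul_X_pow,
    Polynomial.coeff_zero] at hcoeff
  rwa [sum_eq_single j (fun i hi hij => if_neg (by have := hlo hi; have := hlo hj; omega))
    (fun hj' => absurd hj hj'), if_pos rfl] at hcoeff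

theorem Real.infinite_cos_image_Ioo {x y : ℝ} (hxy : x < y) : (cos '' Set.Ioo x y).Infinite := by
  refine (isPreconnected_Ioo.image _ continuous_cos.continuousOn).infinite_of_nontrivial ?_
  by_contra hconst
  rw [Set.not_nontrivial_iff] at hconst
  have hderiv_zero : ∀ {f : ℝ → ℝ} {c t f' : ℝ}, Set.EqOn f (fun _ => c) (Set.Ioo x y) →
      t ∈ Set.Ioo x y → HasDerivAt f f' t → f' = 0 := fun hf ht hd =>
    hd.unique ((hasDerivAt_const _ _).congr_of_eventuallyEq
      (Filter.eventuallyEq_of_mem (isOpen_Ioo.mem_nhds ht) hf))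
  have hmid : (x + y) / 2 ∈ Set.Ioo x y := ⟨by linarith, by linarith⟩
  have hsin : Set.EqOn sin (fun _ => 0) (Set.Ioo x y) := fun t ht =>
    neg_eq_zero.mp (hderiv_zero (fun s hs => hconst ⟨s, hs, rfl⟩ ⟨_, hmid, rfl⟩) ht
      (hasDerivAt_cos t))
  have hcos : cos ((x + y) / 2) = 0 := hderiv_zero hsin hmid (hasDerivAt_sin _)
  have := sin_sq_add_cos_sq ((x + y) / 2)
  rw [hsin hmid, hcos] at this
  norm_num at this

theorem stmt_11 (a r : ℝ) (hr : 0 < r) (hra : r < a) :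
    ¬ ∃ (m : ℕ) (c : ℕ → ℝ) (x y : ℝ), 1 ≤ m ∧ x < y ∧
      (∀ t ∈ Set.Ioo x y, Real.cos t ≠ 0) ∧
      (∀ t ∈ Set.Ioo x y, ∀ φ : ℝ,
        (DeltaIII^[m] (fun t φ => (a + r * Real.cos t) * Real.cos φ)) t φ +
          ∑ i ∈ Finset.Icc 1 m,
            c i * (DeltaIII^[m - i] (fun t φ => (a + r * Real.cos t) * Real.cos φ)) t φ = 0) := by
  rintro ⟨m, c, x, y, -, hxy, hcos, heq⟩
  let Q : ℤ → ℝ := fun j => anchorCoeff a r m j + ∑ i ∈ Icc 1 m, c i * anchorCoeff a r (m - i) j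
  have hQ : ∀ u ∈ cos '' Set.Ioo x y, u ≠ 0 → ∑ j ∈ Icc (-2 * m : ℤ) 1, Q j * u ^ j = 0 := by
    rintro _ ⟨t, ht, rfl⟩ -
    have h := heq t ht 0
    simp only [iterate_DeltaIII_anchor a r _ (hcos t ht), cos_zero, mul_one] at h
    rw [sum_congr rfl fun i _ => by rw [cosLaurent_anchorCoeff_of_le a r (Nat.sub_le m i)]] at h
    rw [← h]
    simp only [Q, cosLaurent, add_mul, sum_add_distrib, sum_mul, mul_sum, mul_assoc]
    rw [sum_comm]
  have hlead : Q (-2 * m) = anchorCoeff a r m (-2 * m) := by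
    refine add_eq_left.mpr (sum_eq_zero fun i hi => ?_)
    rw [anchorCoeff_eq_zero_of_notMem a r (m - i), mul_zero]
    simp only [mem_Icc] at hi ⊢
    omega
  exact anchorCoeff_neg_two_mul_ne_zero (hr.trans hra).ne' r m <|
    hlead ▸ eq_zero_of_sum_zpow_eq_zero (Real.infinite_cos_image_Ioo hxy) hQ
      (left_mem_Icc.mpr (by omega))
end
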